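/- For every variable z, every context Γ, every variable x, and every term M in Λ↑, one has {z/Γ}(λz ({zx} M)) = λz ({z/Γ,x} M). -/
import Mathlib


/-- Terms of Λ↑: variables, application, named abstraction, explicit weakening. -/
inductive Tm : Type
  | var : ℕ → Tm
  | app : Tm → Tm → Tm
  | lam : ℕ → Tm → Tm
  | up  : Tm → Tm

/-- Renaming functions: `swap y x` is `{yx}`, `lift F x` is `F_x`. -/
inductive Ren : Type
  | swap : ℕ → ℕ → Ren
  | lift : Ren → ℕ → Ren

/-- Action of a renaming function on a term. -/
def Ren.apply : Ren → Tm → Tm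
  | F, .app M N => .app (F.apply M) (F.apply N)
  | F, .lam x M => .lam x ((F.lift x).apply M)
  | .lift F _, .up M => .up (F.apply M)
  | .lift F x, .var z => if z = x then .var x else .up (F.apply (.var z))
  | .swap _ _, .up M => .up M
  | .swap y x, .var z => if z = x then .var y else .up (.var z)
termination_by F M => (sizeOf M, sizeOf F)

/-- Iterated lifting `F_Γ` for a context `Γ = y₁,…,yₙ` (the list `[y₁,…,yₙ]`):
lift by `y₁` first, then `y₂`, …, then `yₙ`. -/
def Ren.liftCtx (F : Ren) (Γ : List ℕ) : Ren := Γ.foldl Ren.lift F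

/-- Alpha-conversion: smallest compatible equivalence with `λx M =α λy {yx}M`. -/
inductive Alpha : Tm → Tm → Prop
  | refl (M) : Alpha M M
  | symm {M N} : Alpha M N → Alpha N M
  | trans {M N P} : Alpha M N → Alpha N P → Alpha M P
  | app {M₁ M₂ N₁ N₂} : Alpha M₁ M₂ → Alpha N₁ N₂ → Alpha (.app M₁ N₁) (.app M₂ N₂)
  | lam {M₁ M₂} (x) : Alpha M₁ M₂ → Alpha (.lam x M₁) (.lam x M₂)
  | up {M₁ M₂} : Alpha M₁ M₂ → Alpha (.up M₁) (.up M₂)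
  | rename (x y M) : Alpha (.lam x M) (.lam y ((Ren.swap y x).apply M))

/-- de Bruijn normalisation `db_z : Λ↑ → Λ↑`. -/
def db (z : ℕ) : Tm → Tm
  | .var x => .var x
  | .up M => .up (db z M)
  | .app M N => .app (db z M) (db z N)
  | .lam x M => .lam z ((Ren.swap z x).apply (db z M))
/-- Derivations of judgments `Γ ⊢ M`.  A context `Γ = y₁,…,yₙ` is the list
`[y₁,…,yₙ]` and `Γ,x` is `Γ ++ [x]`. -/
inductive Der : List ℕ → Tm → Type
  | varNil (x : ℕ) : Der [] (.var x)
  | varHere (Γ : List ℕ) (x : ℕ) : Der (Γ ++ [x]) (.var x)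
  | varThere {Γ : List ℕ} {x : ℕ} (z : ℕ) : z ≠ x → Der Γ (.var x) → Der (Γ ++ [z]) (.var x)
  | app {Γ M N} : Der Γ M → Der Γ N → Der Γ (.app M N)
  | upNil {M} : Der [] M → Der [] (.up M)
  | upCons {Γ M} (x : ℕ) : Der Γ M → Der (Γ ++ [x]) (.up M)
  | lam {Γ M} (x : ℕ) : Der (Γ ++ [x]) M → Der Γ (.lam x M)

/-- Generalized de Bruijn terms. -/
inductive Db : Type
  | var : ℕ → Db
  | one : Db
  | app : Db → Db → Db
  | lam : Db → Db
  | up  : Db → Db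

/-- Auxiliary translation, with the context given in *reversed* order
(head of the list is the last variable of the context). -/
def transAux : List ℕ → Tm → Db
  | Γ, .app M N => .app (transAux Γ M) (transAux Γ N)
  | Γ, .lam x M => .lam (transAux (x :: Γ) M)
  | [], .var x => .var x
  | y :: Γ, .var x => if y = x then .one else .up (transAux Γ (.var x))
  | [], .up M => .up (transAux [] M)
  | _ :: Γ, .up M => .up (transAux Γ M)
termination_by Γ M => (sizeOf M, Γ.length)

/-- The translation `‖Γ ⊢ M‖`, with `Γ = y₁,…,yₙ` given as the list `[y₁,…,yₙ]`. -/
def transl (Γ : List ℕ) (M : Tm) : Db := transAux Γ.reverse M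

/-- The map `db_z` from generalized de Bruijn terms back to `Λ↑`. -/
def dbD (z : ℕ) : Db → Tm
  | .var x => .var x
  | .one => .var z
  | .lam A => .lam z (dbD z A)
  | .app A B => .app (dbD z A) (dbD z B)
  | .up A => .up (dbD z A)

/-- The function `{z/Γ}`, with `Γ = y₁,…,yₙ` given as the list `[y₁,…,yₙ]`:
`{z/nil}M = M` and `{z/x,Δ}M = {z/Δ}({zx}_Δ M)`. -/
def subAll (z : ℕ) : List ℕ → Tm → Tm
  | [], M => M
  | x :: Δ, M => subAll z Δ (((Ren.swap z x).liftCtx Δ).apply M)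

lemma apply_lam (F : Ren) (x : ℕ) (M : Tm) :
    F.apply (.lam x M) = .lam x ((F.lift x).apply M) := by
  cases F <;> simp [Ren.apply]

lemma apply_app (F : Ren) (M N : Tm) :
    F.apply (.app M N) = .app (F.apply M) (F.apply N) := by
  cases F <;> simp [Ren.apply]

lemma liftCtx_append (F : Ren) (γ : List ℕ) (w : ℕ) :
    F.liftCtx (γ ++ [w]) = (F.liftCtx γ).lift w := by
  simp [Ren.liftCtx]

theorem renComm (z x : ℕ) : ∀ (M : Tm) (γ : List ℕ) (F : Ren),
    ((F.lift z).liftCtx γ.reverse).apply (((Ren.swap z x).liftCtx γ.reverse).apply M)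
      = ((Ren.swap z x).liftCtx γ.reverse).apply (((F.lift x).liftCtx γ.reverse).apply M)
  | .app M N, γ, F => by
      rw [apply_app, apply_app, apply_app, apply_app, renComm z x M γ F, renComm z x N γ F]
  | .lam w N, γ, F => by
      rw [apply_lam, apply_lam, apply_lam, apply_lam]
      have h : ∀ G : Ren, (G.liftCtx γ.reverse).lift w = G.liftCtx (w :: γ).reverse := by
        intro G; rw [List.reverse_cons, liftCtx_append]
      rw [h, h, h, renComm z x N (w :: γ) F]
  | .var v, [], F => by
      by_cases h : v = x
      · subst h
        by_cases h2 : v = z <;> simp [Ren.liftCtx, Ren.apply, h2]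
      · simp [Ren.liftCtx, Ren.apply, h]
  | .var v, w :: δ, F => by
      have h : ∀ G : Ren, G.liftCtx (w :: δ).reverse = (G.liftCtx δ.reverse).lift w := by
        intro G; rw [List.reverse_cons, liftCtx_append]
      rw [h, h, h]
      by_cases hv : v = w
      · subst hv; simp [Ren.apply]
      · simp only [Ren.apply, if_neg hv]
        rw [renComm z x (.var v) δ F]
  | .up N, [], F => by
      simp [Ren.liftCtx, Ren.apply]
  | .up N, w :: δ, F => by
      have h : ∀ G : Ren, G.liftCtx (w :: δ).reverse = (G.liftCtx δ.reverse).lift w := by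
        intro G; rw [List.reverse_cons, liftCtx_append]
      rw [h, h, h]
      simp only [Ren.apply]
      rw [renComm z x N δ F]
termination_by M γ F => (sizeOf M, γ.length)

/-- `{z/Γ}(λz ({zx} M)) = λz ({z/Γ,x} M)`. -/
theorem stmt14 (z : ℕ) (Γ : List ℕ) (x : ℕ) (M : Tm) :
    subAll z Γ (Tm.lam z ((Ren.swap z x).apply M))
      = Tm.lam z (subAll z (Γ ++ [x]) M) := by
  induction Γ generalizing M with
  | nil => simp [subAll, Ren.liftCtx]
  | cons y Δ ih =>
      show subAll z Δ _ = _
      rw [apply_lam]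
      have hc := renComm z x M [] ((Ren.swap z y).liftCtx Δ)
      simp only [List.reverse_nil, Ren.liftCtx, List.foldl_nil] at hc
      simp only [Ren.liftCtx] at hc ⊢
      rw [hc]
      have : ∀ N, subAll z (y :: (Δ ++ [x])) N
          = subAll z (Δ ++ [x]) (((Ren.swap z y).liftCtx Δ |>.lift x).apply N) := by
        intro N
        show subAll z (Δ ++ [x]) _ = _
        simp only [List.append_eq, liftCtx_append]
      simp only [Ren.liftCtx] at this
      rw [List.cons_append, this, ih]
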